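/- Let β = 2, t > 1, and let y = m(y)·2^{e(y)} ∈ D with 2^{t-1} ≤ |m(y)| < 2^t and e(y) > E_min. For any real w̃ ∈ [y − 2^{e(y)}, y + 2^{e(y)}], the difference y − fl(w̃) can only take the values 0, ±2^{e(y)-1}, or ±2^{e(y)}. -/

import Mathlib

/-- Dekker's floating point number system as a set of reals. -/
def Dekker (β : ℤ) (t : ℕ) (Emin Emax : ℤ) : Set ℝ :=
  {x | ∃ m e : ℤ, |m| < β ^ t ∧ Emin ≤ e ∧ e ≤ Emax ∧ x = (m : ℝ) * (β : ℝ) ^ e}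

/-!
Write `e = e(y)`. The neighbour `y ± 2^e` on the side of `w̃` lies in `D` (after a carry to
exponent `e + 1` if the mantissa overflows), unless `y` is the extreme point of `D` on that side,
in which case `fl(w̃) = y`. As `w̃` lies between `y` and that neighbour, `|y - fl(w̃)| ≤ 2^e`.
Hence `|fl(w̃)| ≥ (2^(t-1) - 1) 2^e ≥ 2^(t-1) 2^(e-1)` since `t > 1`, which forces the
exponent of `fl(w̃)` to be at least `e - 1`. So `y - fl(w̃)` is an integer multiple of `2^(e-1)`
of absolute value at most `2^e`.
-/

structure IsNearestRounding (S : Set ℝ) (fl : ℝ → ℝ) : Prop where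
  mem : ∀ x, fl x ∈ S
  abs_sub_le : ∀ x, ∀ a ∈ S, |fl x - x| ≤ |a - x|

namespace IsNearestRounding

variable {S : Set ℝ} {fl : ℝ → ℝ}

theorem neg (h : IsNearestRounding S fl) (hS : ∀ x ∈ S, -x ∈ S) :
    IsNearestRounding S (fun x => -fl (-x)) where
  mem x := hS _ (h.mem (-x))
  abs_sub_le x a ha :=
    calc |-fl (-x) - x| = |fl (-x) - -x| := by rw [← abs_neg]; congr 1; ring
      _ ≤ |-a - -x| := h.abs_sub_le (-x) (-a) (hS a ha)
      _ = |a - x| := by rw [← abs_neg]; congr 1; ring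

theorem abs_sub_le_of_le_of_le (h : IsNearestRounding S fl) {y w a : ℝ} (ha : a ∈ S)
    (hyw : y ≤ w) (hwa : w ≤ a) : |y - fl w| ≤ a - y := by
  have hnear := h.abs_sub_le w a ha
  rw [abs_of_nonneg (sub_nonneg.2 hwa)] at hnear
  calc |y - fl w| ≤ |y - w| + |w - fl w| := _root_.abs_sub_le y w (fl w)
    _ = (w - y) + |fl w - w| := by rw [abs_sub_comm, abs_of_nonneg (sub_nonneg.2 hyw), abs_sub_comm]
    _ ≤ a - y := by linarith

theorem eq_of_isGreatest (h : IsNearestRounding S fl) {y w : ℝ} (hy : IsGreatest S y)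
    (hyw : y ≤ w) : fl w = y := by
  have hle : fl w ≤ y := hy.2 (h.mem w)
  have hnear := h.abs_sub_le w y hy.1
  rw [abs_of_nonpos (by linarith), abs_of_nonpos (by linarith)] at hnear
  linarith

theorem abs_sub_le_of_add_mem_or_isGreatest (h : IsNearestRounding S fl) {y w d : ℝ}
    (hd : 0 ≤ d) (hS : y + d ∈ S ∨ IsGreatest S y) (hyw : y ≤ w) (hwd : w ≤ y + d) :
    |y - fl w| ≤ d := by
  rcases hS with hmem | hgreatest
  · simpa using h.abs_sub_le_of_le_of_le hmem hyw hwd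
  · simpa [h.eq_of_isGreatest hgreatest hyw] using hd

end IsNearestRounding

namespace Dekker

variable {β : ℤ} {t : ℕ} {Emin Emax : ℤ}

theorem mul_zpow_mem {m e : ℤ} (hm : |m| < β ^ t) (he1 : Emin ≤ e) (he2 : e ≤ Emax) :
    (m : ℝ) * (β : ℝ) ^ e ∈ Dekker β t Emin Emax :=
  ⟨m, e, hm, he1, he2, rfl⟩

theorem neg_mem {x : ℝ} (hx : x ∈ Dekker β t Emin Emax) : -x ∈ Dekker β t Emin Emax := by
  obtain ⟨m, e, hm, he1, he2, rfl⟩ := hx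
  exact ⟨-m, e, by rwa [abs_neg], he1, he2, by push_cast; ring⟩

theorem add_zpow_mem_or_isGreatest (ht : 0 < t) {m e : ℤ} (hm : |m| < 2 ^ t)
    (he1 : Emin ≤ e) (he2 : e ≤ Emax) :
    (m : ℝ) * 2 ^ e + 2 ^ e ∈ Dekker 2 t Emin Emax ∨
      IsGreatest (Dekker 2 t Emin Emax) ((m : ℝ) * 2 ^ e) := by
  have hm' := abs_lt.1 hm
  by_cases hmax : m = 2 ^ t - 1
  · subst hmax
    rcases he2.lt_or_eq with he2 | rfl
    · -- the carry: `(2^t - 1) 2^e + 2^e = 2^(t-1) 2^(e+1)`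
      left
      have hpow : (2 : ℤ) ^ t = 2 ^ (t - 1) * 2 := by rw [← pow_succ, Nat.sub_add_cancel ht]
      have hmant : |(2 : ℤ) ^ (t - 1)| < 2 ^ t := by
        rw [abs_of_pos (by positivity), hpow]; linarith [pow_pos (two_pos : (0 : ℤ) < 2) (t - 1)]
      convert mul_zpow_mem (β := 2) hmant (show Emin ≤ e + 1 by omega) he2 using 1
      have hpowR : (2 : ℝ) ^ t = 2 ^ (t - 1) * 2 := by exact_mod_cast hpow
      rw [zpow_add_one₀ (by norm_num)]
      push_cast
      rw [hpowR]
      ring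
    · refine Or.inr ⟨mul_zpow_mem hm he1 le_rfl, ?_⟩
      rintro _ ⟨n, f, hn, -, hf, rfl⟩
      have hn_le : (n : ℝ) ≤ (2 ^ t - 1 : ℤ) := by
        exact_mod_cast (show n ≤ 2 ^ t - 1 by linarith [(abs_lt.1 hn).2])
      have hmant : (0 : ℝ) ≤ (2 ^ t - 1 : ℤ) := by
        exact_mod_cast (show (0 : ℤ) ≤ 2 ^ t - 1 by linarith)
      have hpow : (2 : ℝ) ^ f ≤ 2 ^ e := zpow_le_zpow_right₀ one_le_two hf
      push_cast at hn_le hmant ⊢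
      nlinarith [zpow_pos (two_pos : (0 : ℝ) < 2) f]
  · left
    convert mul_zpow_mem (β := 2) (t := t) (m := m + 1) (abs_lt.2 ⟨by omega, by omega⟩) he1 he2
      using 1
    push_cast
    ring

theorem exists_eq_int_mul_zpow (ht : 0 < t) {x : ℝ} (hx : x ∈ Dekker 2 t Emin Emax) {k : ℤ}
    (hk : 2 ^ (t - 1) * 2 ^ k ≤ |x|) : ∃ n : ℤ, x = n * 2 ^ k := by
  obtain ⟨m, f, hm, -, -, rfl⟩ := hx
  have hkf : k ≤ f := by
    by_contra! hfk
    have hm' : |(m : ℝ)| < 2 ^ (t - 1) * 2 := by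
      rw [← pow_succ, Nat.sub_add_cancel ht]; exact_mod_cast hm
    have hpow : (2 : ℝ) ^ f * 2 ≤ 2 ^ k := by
      rw [← zpow_add_one₀ two_ne_zero]; exact zpow_le_zpow_right₀ one_le_two hfk
    push_cast at hk
    rw [abs_mul, abs_of_pos (zpow_pos (two_pos : (0 : ℝ) < 2) f)] at hk
    nlinarith [zpow_pos (two_pos : (0 : ℝ) < 2) f, pow_pos (two_pos : (0 : ℝ) < 2) (t - 1)]
  obtain ⟨d, rfl⟩ : ∃ d : ℕ, f = k + d := ⟨(f - k).toNat, by omega⟩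
  exact ⟨m * 2 ^ d, by push_cast; rw [zpow_add₀ two_ne_zero, zpow_natCast]; ring⟩

end Dekker

theorem IsNearestRounding.dekker_abs_sub_le {t : ℕ} {Emin Emax : ℤ} {fl : ℝ → ℝ}
    (hfl : IsNearestRounding (Dekker 2 t Emin Emax) fl) (ht : 0 < t) {m e : ℤ}
    (hm : |m| < 2 ^ t) (he1 : Emin ≤ e) (he2 : e ≤ Emax) {w : ℝ}
    (hw : |w - m * 2 ^ e| ≤ 2 ^ e) : |m * 2 ^ e - fl w| ≤ 2 ^ e := by
  have hpos : (0 : ℝ) ≤ 2 ^ e := by positivity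
  obtain ⟨hw1, hw2⟩ := abs_sub_le_iff.1 hw
  rcases le_total ((m : ℝ) * 2 ^ e) w with hyw | hwy
  · exact hfl.abs_sub_le_of_add_mem_or_isGreatest hpos
      (Dekker.add_zpow_mem_or_isGreatest ht hm he1 he2) hyw (by linarith)
  · have hm' : |-m| < 2 ^ t := by rwa [abs_neg]
    have := (hfl.neg fun _ => Dekker.neg_mem).abs_sub_le_of_add_mem_or_isGreatest (w := -w) hpos
      (Dekker.add_zpow_mem_or_isGreatest ht hm' he1 he2) (by push_cast; linarith)
      (by push_cast; linarith)
    rwa [neg_neg, Int.cast_neg, neg_mul, neg_sub_neg, abs_sub_comm] at this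

theorem int_mul_zpow_sub_one_mem_of_abs_le {k e : ℤ} (h : |(k : ℝ) * 2 ^ (e - 1)| ≤ 2 ^ e) :
    (k : ℝ) * 2 ^ (e - 1) ∈
      ({0, (2 : ℝ) ^ (e - 1), -(2 : ℝ) ^ (e - 1), (2 : ℝ) ^ e, -(2 : ℝ) ^ e} : Set ℝ) := by
  have hpos : (0 : ℝ) < 2 ^ (e - 1) := by positivity
  have h2e : (2 : ℝ) ^ e = 2 * 2 ^ (e - 1) := by
    rw [← zpow_one_add₀ two_ne_zero]; ring_nf
  rw [abs_mul, abs_of_pos hpos, h2e, mul_le_mul_iff_left₀ hpos] at h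
  have hk : |k| ≤ 2 := by exact_mod_cast h
  have hk := abs_le.1 hk
  obtain rfl | rfl | rfl | rfl | rfl : k = 0 ∨ k = 1 ∨ k = -1 ∨ k = 2 ∨ k = -2 := by omega
  all_goals simp [h2e]

/-- for normal y and w̃ within one ulp-scale interval around y (t > 1),
y − fl(w̃) takes only the values 0, ±2^{e(y)-1}, ±2^{e(y)}. -/
theorem dekker_full_interval_difference
    (t : ℕ) (Emin Emax : ℤ) (ht : 1 < t)
    (fl : ℝ → ℝ)
    (hmem : ∀ x, fl x ∈ Dekker 2 t Emin Emax)
    (hnear : ∀ x, ∀ a ∈ Dekker 2 t Emin Emax, |fl x - x| ≤ |a - x|)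
    (my ey : ℤ) (hmy1 : 2 ^ (t - 1) ≤ |my|) (hmy2 : |my| < 2 ^ t)
    (hey1 : Emin < ey) (hey2 : ey ≤ Emax)
    (y : ℝ) (hy : y = (my : ℝ) * (2 : ℝ) ^ ey)
    (wt : ℝ) (hw1 : y - (2 : ℝ) ^ ey ≤ wt) (hw2 : wt ≤ y + (2 : ℝ) ^ ey) :
    y - fl wt ∈
      ({0, (2 : ℝ) ^ (ey - 1), -(2 : ℝ) ^ (ey - 1), (2 : ℝ) ^ ey, -(2 : ℝ) ^ ey} : Set ℝ) := by
  subst hy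
  have hfl : IsNearestRounding (Dekker 2 t Emin Emax) fl := ⟨hmem, hnear⟩
  have h2e : (2 : ℝ) ^ ey = 2 * 2 ^ (ey - 1) := by rw [← zpow_one_add₀ two_ne_zero]; ring_nf
  have hclose : |my * 2 ^ ey - fl wt| ≤ 2 ^ ey :=
    hfl.dekker_abs_sub_le (by omega) hmy2 hey1.le hey2
      (abs_sub_le_iff.2 ⟨by linarith, by linarith⟩)
  have hy : (2 : ℝ) ^ (t - 1) * 2 ^ ey ≤ |(my : ℝ) * 2 ^ ey| := by
    rw [abs_mul, abs_of_pos (zpow_pos (two_pos : (0 : ℝ) < 2) ey)]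
    gcongr
    exact_mod_cast hmy1
  have hP : (2 : ℝ) ≤ 2 ^ (t - 1) := le_self_pow₀ one_le_two (by omega)
  have hfl_large : (2 : ℝ) ^ (t - 1) * 2 ^ (ey - 1) ≤ |fl wt| := by
    have hdist := abs_sub_abs_le_abs_sub ((my : ℝ) * 2 ^ ey) (fl wt)
    have hq : (2 : ℝ) * 2 ^ (ey - 1) ≤ 2 ^ (t - 1) * 2 ^ (ey - 1) :=
      mul_le_mul_of_nonneg_right hP (by positivity)
    rw [h2e] at hclose hy hdist
    linarith
  obtain ⟨n, hn⟩ := Dekker.exists_eq_int_mul_zpow (by omega) (hmem wt) hfl_large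
  have hdiff : (my : ℝ) * 2 ^ ey - fl wt = ((2 * my - n : ℤ) : ℝ) * 2 ^ (ey - 1) := by
    rw [hn, h2e]; push_cast; ring
  rw [hdiff] at hclose ⊢
  exact int_mul_zpow_sub_one_mem_of_abs_le hclose
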